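/- arXiv:2009.02480 — 2 statements merged into one kernel-verified Lean document; each statement's English description precedes it below -/
import Mathlib

section
/- Define a : {(x,y) ∈ ℝ² : x > 0, y > 0} → ℝ³ by a(x,y) = (x(x³+2y³), y(x³+2y³), x²(x³+4y³)) / (x³+y³). Then the unit normal n(x,y) := (∂_x a × ∂_y a)/|∂_x a × ∂_y a| converges to (0,0,1) as (x,y) → (0,0) within the open first quadrant. -/
open Filter Topology

noncomputable def blendSurf : ℝ × ℝ → Fin 3 → ℝ := fun v =>
  ![v.1 * (v.1 ^ 3 + 2 * v.2 ^ 3) / (v.1 ^ 3 + v.2 ^ 3),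
    v.2 * (v.1 ^ 3 + 2 * v.2 ^ 3) / (v.1 ^ 3 + v.2 ^ 3),
    v.1 ^ 2 * (v.1 ^ 3 + 4 * v.2 ^ 3) / (v.1 ^ 3 + v.2 ^ 3)]

noncomputable def blendNormal : ℝ × ℝ → Fin 3 → ℝ := fun v =>
  let c := crossProduct (fderiv ℝ blendSurf v (1, 0)) (fderiv ℝ blendSurf v (0, 1))
  (Real.sqrt (∑ i, c i ^ 2))⁻¹ • c

/-!
Write `s = x³`, `t = y³`. The cross product `c = ∂ₓa × ∂ᵧa` is explicit: its third component is
`((s + 2t)/(s + t))²`, which stays in `[1, 4]` but has no limit at the corner, while the first two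
are bounded by `16x` and `6x`. Normalization is invariant under positive scaling, so the normal is
also the normalization of `c / c₃ = (c₁/c₃, c₂/c₃, 1) → (0, 0, 1)`, and normalization is continuous
away from `0`.
-/

lemma fderiv_apply_one_zero {E : Type*} [NormedAddCommGroup E] [NormedSpace ℝ E]
    {f : ℝ × ℝ → E} {x y : ℝ} {f' : E} (hf : DifferentiableAt ℝ f (x, y))
    (h : HasDerivAt (fun t => f (t, y)) f' x) : fderiv ℝ f (x, y) (1, 0) = f' :=
  (hf.hasFDerivAt.comp_hasDerivAt x ((hasDerivAt_id x).prodMk (hasDerivAt_const x y))).unique h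

lemma fderiv_apply_zero_one {E : Type*} [NormedAddCommGroup E] [NormedSpace ℝ E]
    {f : ℝ × ℝ → E} {x y : ℝ} {f' : E} (hf : DifferentiableAt ℝ f (x, y))
    (h : HasDerivAt (fun t => f (x, t)) f' y) : fderiv ℝ f (x, y) (0, 1) = f' :=
  (hf.hasFDerivAt.comp_hasDerivAt y ((hasDerivAt_const y x).prodMk (hasDerivAt_id y))).unique h

noncomputable def unitVec {ι : Type*} [Fintype ι] (w : ι → ℝ) : ι → ℝ :=
  (√(∑ i, w i ^ 2))⁻¹ • w

lemma unitVec_smul {ι : Type*} [Fintype ι] {c : ℝ} (hc : 0 < c) (w : ι → ℝ) :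
    unitVec (c • w) = unitVec w := by
  have hsum : ∑ i, (c • w) i ^ 2 = c ^ 2 * ∑ i, w i ^ 2 := by
    simp only [Pi.smul_apply, smul_eq_mul, mul_pow, Finset.mul_sum]
  rw [unitVec, unitVec, hsum, Real.sqrt_mul (sq_nonneg c), Real.sqrt_sq hc.le, smul_smul]
  congr 1
  field_simp

lemma continuousAt_unitVec {ι : Type*} [Fintype ι] {w : ι → ℝ} (hw : w ≠ 0) :
    ContinuousAt unitVec w := by
  have hpos : 0 < ∑ i, w i ^ 2 := by
    obtain ⟨i, hi⟩ := Function.ne_iff.1 hw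
    exact Finset.sum_pos' (fun j _ => sq_nonneg (w j))
      ⟨i, Finset.mem_univ i, pow_two_pos_of_ne_zero hi⟩
  have hsqrt : Continuous fun w : ι → ℝ => √(∑ i, w i ^ 2) :=
    (continuous_finsetSum _ fun i _ => (continuous_apply i).pow 2).sqrt
  exact (hsqrt.continuousAt.inv₀ (Real.sqrt_pos.2 hpos).ne').smul continuousAt_id

lemma unitVec_zero_zero_one : unitVec ![(0 : ℝ), 0, 1] = ![0, 0, 1] := by
  simp [unitVec, Fin.sum_univ_three]

lemma abs_inv_mul_le_abs {c u : ℝ} (hc : 1 ≤ c) : |c⁻¹ * u| ≤ |u| := by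
  rw [abs_mul, abs_inv, abs_of_pos (by linarith)]
  exact mul_le_of_le_one_left (abs_nonneg u) (inv_le_one_of_one_le₀ hc)

lemma tendsto_unitVec_of_one_le_apply_two {α : Type*} {l : Filter α} {c : α → Fin 3 → ℝ}
    (h0 : Tendsto (fun a => c a 0) l (𝓝 0)) (h1 : Tendsto (fun a => c a 1) l (𝓝 0))
    (h2 : ∀ᶠ a in l, 1 ≤ c a 2) :
    Tendsto (fun a => unitVec (c a)) l (𝓝 ![0, 0, 1]) := by
  have hscaled : Tendsto (fun a => (c a 2)⁻¹ • c a) l (𝓝 ![0, 0, 1]) := by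
    refine tendsto_pi_nhds.2 fun i => ?_
    fin_cases i
    · show Tendsto (fun a => (c a 2)⁻¹ * c a 0) l (𝓝 0)
      exact squeeze_zero_norm' (h2.mono fun a ha => abs_inv_mul_le_abs ha) (by simpa using h0.abs)
    · show Tendsto (fun a => (c a 2)⁻¹ * c a 1) l (𝓝 0)
      exact squeeze_zero_norm' (h2.mono fun a ha => abs_inv_mul_le_abs ha) (by simpa using h1.abs)
    · show Tendsto (fun a => (c a 2)⁻¹ * c a 2) l (𝓝 1)
      exact tendsto_const_nhds.congr' (h2.mono fun a ha => (inv_mul_cancel₀ (by linarith)).symm)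
  have hlim := (continuousAt_unitVec (w := ![(0 : ℝ), 0, 1]) (by simp)).tendsto
  rw [unitVec_zero_zero_one] at hlim
  refine (hlim.comp hscaled).congr' (h2.mono fun a ha => ?_)
  exact unitVec_smul (inv_pos.2 (by linarith)) (c a)

lemma mul_sq_le_add_cubes {x y : ℝ} (hx : 0 ≤ x) (hy : 0 ≤ y) : x * y ^ 2 ≤ x ^ 3 + y ^ 3 := by
  nlinarith [mul_nonneg (add_nonneg hx hy) (sq_nonneg (x - y)), mul_nonneg (sq_nonneg x) hy]

lemma quartic_le_sixteen_mul_add_pow_four {s t : ℝ} (hs : 0 ≤ s) (ht : 0 ≤ t) :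
    2 * s ^ 4 + 13 * s ^ 3 * t + 45 * s ^ 2 * t ^ 2 + 50 * s * t ^ 3 + 16 * t ^ 4 ≤
      16 * (s + t) ^ 4 := by
  have hdiff : 16 * (s + t) ^ 4 -
      (2 * s ^ 4 + 13 * s ^ 3 * t + 45 * s ^ 2 * t ^ 2 + 50 * s * t ^ 3 + 16 * t ^ 4) =
      s * (14 * s ^ 3 + 51 * s ^ 2 * t + 51 * s * t ^ 2 + 14 * t ^ 3) := by ring
  linarith [mul_nonneg hs (by positivity : 0 ≤ 14 * s ^ 3 + 51 * s ^ 2 * t + 51 * s * t ^ 2 +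
    14 * t ^ 3)]

lemma differentiableAt_blendSurf {v : ℝ × ℝ} (h : v.1 ^ 3 + v.2 ^ 3 ≠ 0) :
    DifferentiableAt ℝ blendSurf v := by
  refine differentiableAt_pi.2 fun i => ?_
  fin_cases i <;>
  simp only [blendSurf, Fin.zero_eta, Fin.mk_one, Fin.reduceFinMk, Matrix.cons_val] <;>
  fun_prop (disch := exact h)

lemma hasDerivAt_blendSurf_fst {x y : ℝ} (h : x ^ 3 + y ^ 3 ≠ 0) :
    HasDerivAt (fun t => blendSurf (t, y))
      (((x ^ 3 + y ^ 3) ^ 2)⁻¹ • ![(x ^ 3) ^ 2 + 2 * (y ^ 3) ^ 2, -3 * x ^ 2 * y ^ 4,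
        x * (2 * (x ^ 3) ^ 2 + x ^ 3 * y ^ 3 + 8 * (y ^ 3) ^ 2)]) x := by
  have hden := (hasDerivAt_pow 3 x).add_const (y ^ 3)
  refine hasDerivAt_pi.2 fun i => ?_
  fin_cases i <;> [
    refine (((hasDerivAt_id' x).fun_mul ((hasDerivAt_pow 3 x).add_const (2 * y ^ 3))).fun_div
      hden h).congr_deriv ?_;
    refine ((((hasDerivAt_pow 3 x).add_const (2 * y ^ 3)).const_mul y).fun_div
      hden h).congr_deriv ?_;
    refine (((hasDerivAt_pow 2 x).fun_mul ((hasDerivAt_pow 3 x).add_const (4 * y ^ 3))).fun_div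
      hden h).congr_deriv ?_] <;>
  simp only [Fin.zero_eta, Fin.mk_one, Fin.reduceFinMk, Matrix.cons_val, Pi.smul_apply,
    smul_eq_mul] <;>
  field_simp <;> ring

lemma hasDerivAt_blendSurf_snd {x y : ℝ} (h : x ^ 3 + y ^ 3 ≠ 0) :
    HasDerivAt (fun t => blendSurf (x, t))
      (((x ^ 3 + y ^ 3) ^ 2)⁻¹ • ![3 * x ^ 4 * y ^ 2,
        (x ^ 3) ^ 2 + 6 * x ^ 3 * y ^ 3 + 2 * (y ^ 3) ^ 2, 9 * x ^ 5 * y ^ 2]) y := by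
  have hden := (hasDerivAt_pow 3 y).const_add (x ^ 3)
  refine hasDerivAt_pi.2 fun i => ?_
  fin_cases i <;> [
    refine ((((hasDerivAt_pow 3 y).const_mul 2).const_add (x ^ 3)).const_mul x |>.fun_div
      hden h).congr_deriv ?_;
    refine (((hasDerivAt_id' y).fun_mul (((hasDerivAt_pow 3 y).const_mul 2).const_add
      (x ^ 3))).fun_div hden h).congr_deriv ?_;
    refine ((((hasDerivAt_pow 3 y).const_mul 4).const_add (x ^ 3)).const_mul (x ^ 2) |>.fun_div
      hden h).congr_deriv ?_] <;>
  simp only [Fin.zero_eta, Fin.mk_one, Fin.reduceFinMk, Matrix.cons_val, Pi.smul_apply,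
    smul_eq_mul] <;>
  field_simp <;> ring

noncomputable def blendCross (v : ℝ × ℝ) : Fin 3 → ℝ :=
  crossProduct (fderiv ℝ blendSurf v (1, 0)) (fderiv ℝ blendSurf v (0, 1))

lemma blendCross_eq {x y : ℝ} (h : x ^ 3 + y ^ 3 ≠ 0) :
    blendCross (x, y) =
      ![-(x * (2 * (x ^ 3) ^ 4 + 13 * (x ^ 3) ^ 3 * y ^ 3 + 45 * (x ^ 3) ^ 2 * (y ^ 3) ^ 2 +
            50 * x ^ 3 * (y ^ 3) ^ 3 + 16 * (y ^ 3) ^ 4)) / (x ^ 3 + y ^ 3) ^ 4,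
        3 * x ^ 5 * y ^ 2 * (2 * y ^ 3 - x ^ 3) / (x ^ 3 + y ^ 3) ^ 3,
        ((x ^ 3 + 2 * y ^ 3) / (x ^ 3 + y ^ 3)) ^ 2] := by
  have hd := differentiableAt_blendSurf (v := (x, y)) h
  rw [blendCross, fderiv_apply_one_zero hd (hasDerivAt_blendSurf_fst h),
    fderiv_apply_zero_one hd (hasDerivAt_blendSurf_snd h), cross_apply]
  funext i
  fin_cases i <;>
  simp only [Fin.zero_eta, Fin.mk_one, Fin.reduceFinMk, Matrix.cons_val, Pi.smul_apply,
    smul_eq_mul] <;>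
  field_simp <;> ring

lemma abs_blendCross_zero_le {x y : ℝ} (hx : 0 < x) (hy : 0 < y) :
    |blendCross (x, y) 0| ≤ 16 * x := by
  have hD : 0 < (x ^ 3 + y ^ 3) ^ 4 := by positivity
  have hP := quartic_le_sixteen_mul_add_pow_four (pow_pos hx 3).le (pow_pos hy 3).le
  rw [blendCross_eq (by positivity)]
  simp only [Matrix.cons_val_zero]
  rw [abs_div, abs_neg, abs_of_pos hD, abs_of_pos (by positivity), div_le_iff₀ hD]
  nlinarith [mul_le_mul_of_nonneg_left hP hx.le]

lemma abs_blendCross_one_le {x y : ℝ} (hx : 0 < x) (hy : 0 < y) :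
    |blendCross (x, y) 1| ≤ 6 * x := by
  have hD : 0 < (x ^ 3 + y ^ 3) ^ 3 := by positivity
  have hx3 : x ^ 3 ≤ x ^ 3 + y ^ 3 := by nlinarith [pow_pos hy 3]
  have hxy := mul_sq_le_add_cubes hx.le hy.le
  have hdiff : |2 * y ^ 3 - x ^ 3| ≤ 2 * (x ^ 3 + y ^ 3) := by
    rw [abs_le]; constructor <;> nlinarith [pow_pos hx 3, pow_pos hy 3]
  rw [blendCross_eq (by positivity)]
  simp only [Matrix.cons_val_one, Matrix.cons_val_zero]
  rw [abs_div, abs_of_pos hD, div_le_iff₀ hD]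
  calc |3 * x ^ 5 * y ^ 2 * (2 * y ^ 3 - x ^ 3)|
      = 3 * x * (x ^ 3 * (x * y ^ 2) * |2 * y ^ 3 - x ^ 3|) := by
        rw [abs_mul, abs_of_pos (by positivity : 0 < 3 * x ^ 5 * y ^ 2)]; ring
    _ ≤ 3 * x * ((x ^ 3 + y ^ 3) * (x ^ 3 + y ^ 3) * (2 * (x ^ 3 + y ^ 3))) := by gcongr
    _ = 6 * x * (x ^ 3 + y ^ 3) ^ 3 := by ring

lemma one_le_blendCross_two {x y : ℝ} (hx : 0 < x) (hy : 0 < y) : 1 ≤ blendCross (x, y) 2 := by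
  rw [blendCross_eq (by positivity)]
  simp only [Matrix.cons_val_two, Matrix.tail_cons, Matrix.head_cons]
  exact one_le_pow₀ ((one_le_div (by positivity)).2 (by nlinarith [pow_pos hy 3]))

theorem stmt11 :
    Tendsto blendNormal (𝓝[{v : ℝ × ℝ | 0 < v.1 ∧ 0 < v.2}] 0)
      (𝓝 ![0, 0, 1]) := by
  have hQ : ∀ᶠ v in 𝓝[{v : ℝ × ℝ | 0 < v.1 ∧ 0 < v.2}] 0, 0 < v.1 ∧ 0 < v.2 :=
    self_mem_nhdsWithin
  have hfst : Tendsto (fun v : ℝ × ℝ => v.1) (𝓝[{v : ℝ × ℝ | 0 < v.1 ∧ 0 < v.2}] 0) (𝓝 0) :=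
    continuous_fst.continuousWithinAt.tendsto
  show Tendsto (fun v => unitVec (blendCross v)) _ _
  refine tendsto_unitVec_of_one_le_apply_two ?_ ?_
    (hQ.mono fun v hv => one_le_blendCross_two hv.1 hv.2)
  · exact squeeze_zero_norm' (hQ.mono fun v hv => abs_blendCross_zero_le hv.1 hv.2)
      (by simpa using hfst.const_mul 16)
  · exact squeeze_zero_norm' (hQ.mono fun v hv => abs_blendCross_one_le hv.1 hv.2)
      (by simpa using hfst.const_mul 6)
end

section
/- Let w, w₁, ..., w_L : ℝ² → ℝ be continuous, nonnegative on a neighborhood of σ ∈ ℝ² intersected with a set Γ, and suppose w_j(ξ) > 0 for ξ ∈ Γ near σ with ξ ≠ σ. Suppose w(σ+τ)/w_j(σ+τ) = O(|τ|) and w_ℓ(σ+τ)/w_j(σ+τ) = O(|τ|) for all ℓ ≠ j, as Γ ∋ σ+τ → σ. Let b, r₁, ..., r_L : ℝ² → ℝ³ be continuous. Then the blend a(ξ) := (w(ξ)b(ξ) + Σ_ℓ w_ℓ(ξ)r_ℓ(ξ)) / (w(ξ) + Σ_ℓ w_ℓ(ξ)) satisfies a(σ+τ) → r_j(σ) as Γ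 ∋ σ+τ → σ. -/
open Filter Topology Asymptotics

theorem stmt18 (L : ℕ) (Γ : Set (ℝ × ℝ)) (σ : ℝ × ℝ)
    (w : ℝ × ℝ → ℝ) (wl : Fin L → ℝ × ℝ → ℝ)
    (b : ℝ × ℝ → EuclideanSpace ℝ (Fin 3))
    (r : Fin L → ℝ × ℝ → EuclideanSpace ℝ (Fin 3)) (j : Fin L)
    (hw : Continuous w) (hwl : ∀ ℓ, Continuous (wl ℓ))
    (hb : Continuous b) (hr : ∀ ℓ, Continuous (r ℓ))
    (hwn : ∀ᶠ ξ in 𝓝[Γ] σ, 0 ≤ w ξ)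
    (hwln : ∀ ℓ, ∀ᶠ ξ in 𝓝[Γ] σ, 0 ≤ wl ℓ ξ)
    (hj : ∀ᶠ ξ in 𝓝[Γ \ {σ}] σ, 0 < wl j ξ)
    (hwO : (fun τ => w (σ + τ) / wl j (σ + τ)) =O[𝓝[{τ | σ + τ ∈ Γ \ {σ}}] 0]
      fun τ : ℝ × ℝ => ‖τ‖)
    (hwlO : ∀ ℓ, ℓ ≠ j →
      (fun τ => wl ℓ (σ + τ) / wl j (σ + τ)) =O[𝓝[{τ | σ + τ ∈ Γ \ {σ}}] 0]
        fun τ : ℝ × ℝ => ‖τ‖) :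
    Tendsto (fun ξ => (w ξ + ∑ ℓ, wl ℓ ξ)⁻¹ • (w ξ • b ξ + ∑ ℓ, wl ℓ ξ • r ℓ ξ))
      (𝓝[Γ \ {σ}] σ) (𝓝 (r j σ)) := by

  set F := 𝓝[Γ \ {σ}] σ with hF
  have hjne : ∀ᶠ ξ in F, wl j ξ ≠ 0 := hj.mono fun ξ h => ne_of_gt h
  have htrans : Tendsto (fun ξ => ξ - σ) F (𝓝[{τ | σ + τ ∈ Γ \ {σ}}] 0) := by
    rw [tendsto_nhdsWithin_iff]
    constructor
    · have h : Tendsto (fun ξ : ℝ × ℝ => ξ - σ) (𝓝 σ) (𝓝 (σ - σ)) :=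
        tendsto_id.sub tendsto_const_nhds
      simpa using h.mono_left nhdsWithin_le_nhds
    · filter_upwards [self_mem_nhdsWithin] with ξ hξ
      simpa using hξ
  have hnorm : Tendsto (fun τ : ℝ × ℝ => ‖τ‖) (𝓝[{τ | σ + τ ∈ Γ \ {σ}}] 0) (𝓝 0) := by
    simpa using (continuous_norm.tendsto (0 : ℝ × ℝ)).mono_left nhdsWithin_le_nhds
  have hw0 : Tendsto (fun ξ => w ξ / wl j ξ) F (𝓝 0) := by
    have := (hwO.trans_tendsto hnorm).comp htrans
    simpa [Function.comp_def, add_sub_cancel_left] using this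
  have hrat : ∀ ℓ, Tendsto (fun ξ => wl ℓ ξ / wl j ξ) F (𝓝 (if ℓ = j then 1 else 0)) := by
    intro ℓ
    by_cases hℓ : ℓ = j
    · subst hℓ
      simp only [if_pos rfl]
      exact tendsto_const_nhds.congr' (hjne.mono fun ξ h => (div_self h).symm)
    · simp only [if_neg hℓ]
      have := ((hwlO ℓ hℓ).trans_tendsto hnorm).comp htrans
      simpa [Function.comp_def, add_sub_cancel_left] using this
  have hW : Tendsto (fun ξ => w ξ / wl j ξ + ∑ ℓ, wl ℓ ξ / wl j ξ) F (𝓝 1) := by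
    have hs : Tendsto (fun ξ => ∑ ℓ, wl ℓ ξ / wl j ξ) F
        (𝓝 (∑ ℓ, if ℓ = j then (1 : ℝ) else 0)) :=
      tendsto_finset_sum _ fun ℓ _ => hrat ℓ
    have : (∑ ℓ, if ℓ = j then (1 : ℝ) else 0) = 1 := by simp
    rw [this] at hs
    simpa using hw0.add hs
  have hV : Tendsto (fun ξ => (w ξ / wl j ξ) • b ξ + ∑ ℓ, (wl ℓ ξ / wl j ξ) • r ℓ ξ) F
      (𝓝 (r j σ)) := by
    have hbσ : Tendsto b F (𝓝 (b σ)) := (hb.tendsto σ).mono_left nhdsWithin_le_nhds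
    have hrσ : ∀ ℓ, Tendsto (r ℓ) F (𝓝 (r ℓ σ)) := fun ℓ =>
      ((hr ℓ).tendsto σ).mono_left nhdsWithin_le_nhds
    have hs : Tendsto (fun ξ => ∑ ℓ, (wl ℓ ξ / wl j ξ) • r ℓ ξ) F
        (𝓝 (∑ ℓ, (if ℓ = j then (1 : ℝ) else 0) • r ℓ σ)) :=
      tendsto_finset_sum _ fun ℓ _ => (hrat ℓ).smul (hrσ ℓ)
    have : (∑ ℓ, (if ℓ = j then (1 : ℝ) else 0) • r ℓ σ) = r j σ := by
      rw [Finset.sum_eq_single j] <;> simp +contextual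
    rw [this] at hs
    simpa using (hw0.smul hbσ).add hs
  have hfinal := ((hW.inv₀ one_ne_zero).smul hV)
  rw [inv_one, one_smul] at hfinal
  refine hfinal.congr' ?_
  filter_upwards [hjne] with ξ hc
  have h1 : w ξ / wl j ξ + ∑ ℓ, wl ℓ ξ / wl j ξ = (w ξ + ∑ ℓ, wl ℓ ξ) / wl j ξ := by
    rw [add_div, Finset.sum_div]
  have h2 : (w ξ / wl j ξ) • b ξ + ∑ ℓ, (wl ℓ ξ / wl j ξ) • r ℓ ξ
      = (wl j ξ)⁻¹ • (w ξ • b ξ + ∑ ℓ, wl ℓ ξ • r ℓ ξ) := by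
    simp [smul_add, Finset.smul_sum, smul_smul, div_eq_inv_mul]
  rw [h1, h2, smul_smul]
  congr 1
  rw [div_eq_mul_inv, mul_inv, inv_inv, mul_assoc, mul_inv_cancel₀ hc, mul_one]
end
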